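/- arXiv:2012.04221 — 4 statements merged into one kernel-verified Lean document; each statement's English description precedes it below -/
import Mathlib

section
/- Let A > 0 and C ≥ 0 be real constants. Let g : ℕ → ℝ satisfy 0 < g(t) ≤ A/2 and g(t+1) ≥ (1 − g(t)/A)·g(t) for all t ∈ ℕ. Let e : ℕ → ℝ satisfy e(t) ≥ 0 for all t, e(0) ≤ C·g(0), and e(t+1) ≤ (1 − 2·g(t)/A)·e(t) + (C/A)·g(t)² for all t ∈ ℕ. Then e(t) ≤ C·g(t) for all t ∈ ℕ. -/
/-!
The bound `C * g t` is a supersolution of the linear recursion satisfied by `e`: one step of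
the recursion maps it to `C * (1 - g t / A) * g t`, which the hypothesis on `g` bounds by
`C * g (t + 1)`. Since the coefficient `1 - 2 * g t / A` is nonnegative, the recursion is
monotone, so the bound propagates by induction.
-/

theorem le_of_le_mul_add_of_mul_add_le {α : Type*} [Semiring α] [PartialOrder α]
    [IsOrderedRing α] {a b e u : ℕ → α} (ha : ∀ t, 0 ≤ a t)
    (he : ∀ t, e (t + 1) ≤ a t * e t + b t) (hu : ∀ t, a t * u t + b t ≤ u (t + 1))
    (h0 : e 0 ≤ u 0) : ∀ t, e t ≤ u t
  | 0 => h0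
  | t + 1 => by
    calc e (t + 1) ≤ a t * e t + b t := he t
      _ ≤ a t * u t + b t := by
        gcongr
        · exact ha t
        · exact le_of_le_mul_add_of_mul_add_le ha he hu h0 t
      _ ≤ u (t + 1) := hu t

theorem ditto_local_convergence_recursion_general
    (A C : ℝ) (hA : 0 < A) (hC : 0 ≤ C)
    (g e : ℕ → ℝ)
    (hg_le : ∀ t : ℕ, g t ≤ A / 2)
    (hg_rec : ∀ t : ℕ, g (t + 1) ≥ (1 - g t / A) * g t)
    (he0 : e 0 ≤ C * g 0)
    (he_rec : ∀ t : ℕ, e (t + 1) ≤ (1 - 2 * g t / A) * e t + (C / A) * (g t) ^ 2) :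
    ∀ t : ℕ, e t ≤ C * g t := by
  have hcoeff : ∀ t, 0 ≤ 1 - 2 * g t / A := fun t => by
    rw [sub_nonneg, div_le_one hA]
    linarith [hg_le t]
  have hsuper : ∀ t, (1 - 2 * g t / A) * (C * g t) + C / A * g t ^ 2 ≤ C * g (t + 1) :=
    fun t => calc
      _ = C * ((1 - g t / A) * g t) := by field_simp; ring
      _ ≤ C * g (t + 1) := mul_le_mul_of_nonneg_left (hg_rec t) hC
  exact le_of_le_mul_add_of_mul_add_le hcoeff he_rec hsuper he0

/-- Core recursion underlying Theorem 2 (local convergence of the Ditto solver):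
if the global rate `g` satisfies `g (t+1) ≥ (1 - g t / A) * g t` and the error `e`
satisfies the one-step progress bound, then `e t ≤ C * g t` for all `t`. -/
theorem ditto_local_convergence_recursion
    (A C : ℝ) (hA : 0 < A) (hC : 0 ≤ C)
    (g e : ℕ → ℝ)
    (hg_pos : ∀ t : ℕ, 0 < g t) (hg_le : ∀ t : ℕ, g t ≤ A / 2)
    (hg_rec : ∀ t : ℕ, g (t + 1) ≥ (1 - g t / A) * g t)
    (he_nonneg : ∀ t : ℕ, 0 ≤ e t)
    (he0 : e 0 ≤ C * g 0)
    (he_rec : ∀ t : ℕ, e (t + 1) ≤ (1 - 2 * g t / A) * e t + (C / A) * (g t) ^ 2) :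
    ∀ t : ℕ, e t ≤ C * g t :=
  ditto_local_convergence_recursion_general A C hA hC g e hg_le hg_rec he0 he_rec
end

section
/- Let C ≥ 0 be a real constant and let e : ℕ → ℝ satisfy e(t) ≥ 0 for all t ≥ 1, e(1) ≤ C/2, and e(t+1) ≤ (1 − 2/(t+1))·e(t) + C/(t+1)² for all integers t ≥ 1. Then e(t) ≤ C/(t+1) for all integers t ≥ 1. -/
/-! The bound `C / (t + 1)` is an invariant of the recursion: the contraction factor
`1 - 2 / (t + 1)` is nonnegative for `t ≥ 1`, so the recursion is monotone in `e t`, and feeding in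
`C / (t + 1)` yields `C t / (t + 1)^2 ≤ C / (t + 2)`, because `t (t + 2) ≤ (t + 1)^2`. -/

lemma one_sub_two_div_add_one_nonneg {s : ℝ} (hs : 1 ≤ s) : 0 ≤ 1 - 2 / (s + 1) := by
  rw [sub_nonneg, div_le_one (by linarith)]
  linarith

lemma one_sub_two_div_mul_add_div_sq_le {C s : ℝ} (hC : 0 ≤ C) (hs : -1 < s) :
    (1 - 2 / (s + 1)) * (C / (s + 1)) + C / (s + 1) ^ 2 ≤ C / (s + 2) := by
  have hs₁ : 0 < s + 1 := by linarith
  have hs₂ : 0 < s + 2 := by linarith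
  calc (1 - 2 / (s + 1)) * (C / (s + 1)) + C / (s + 1) ^ 2 = C * s / (s + 1) ^ 2 := by
        field_simp
        ring
    _ ≤ C / (s + 2) := by
        rw [div_le_div_iff₀ (by positivity) hs₂]
        nlinarith [mul_nonneg hC (sq_nonneg s)]

theorem ditto_fedavg_convergence_recursion_general
    (C : ℝ) (hC : 0 ≤ C) (e : ℕ → ℝ)
    (he1 : e 1 ≤ C / 2)
    (he_rec : ∀ t : ℕ, 1 ≤ t →
      e (t + 1) ≤ (1 - 2 / ((t : ℝ) + 1)) * e t + C / ((t : ℝ) + 1) ^ 2) :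
    ∀ t : ℕ, 1 ≤ t → e t ≤ C / ((t : ℝ) + 1) := by
  intro t ht
  induction t, ht using Nat.le_induction with
  | base => norm_num [he1]
  | succ n hn ih =>
    have hn' : (1 : ℝ) ≤ n := by exact_mod_cast hn
    calc e (n + 1) ≤ (1 - 2 / ((n : ℝ) + 1)) * e n + C / ((n : ℝ) + 1) ^ 2 := he_rec n hn
      _ ≤ (1 - 2 / ((n : ℝ) + 1)) * (C / ((n : ℝ) + 1)) + C / ((n : ℝ) + 1) ^ 2 := by
        gcongr
        exact one_sub_two_div_add_one_nonneg hn'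
      _ ≤ C / ((n : ℝ) + 2) := one_sub_two_div_mul_add_div_sq_le hC (by linarith)
      _ = C / (((n + 1 : ℕ) : ℝ) + 1) := by push_cast; ring

/-- Core recursion underlying the corollary on convergence of personalized models
when the global objective is FedAvg (rate `g t = D/(t+1)`): the error recursion
`e (t+1) ≤ (1 - 2/(t+1)) * e t + C/(t+1)^2` with `e 1 ≤ C/2` yields
`e t ≤ C/(t+1)` for all `t ≥ 1`. -/
theorem ditto_fedavg_convergence_recursion
    (C : ℝ) (hC : 0 ≤ C) (e : ℕ → ℝ)
    (he_nonneg : ∀ t : ℕ, 1 ≤ t → 0 ≤ e t)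
    (he1 : e 1 ≤ C / 2)
    (he_rec : ∀ t : ℕ, 1 ≤ t →
      e (t + 1) ≤ (1 - 2 / ((t : ℝ) + 1)) * e t + C / ((t : ℝ) + 1) ^ 2) :
    ∀ t : ℕ, 1 ≤ t → e t ≤ C / ((t : ℝ) + 1) :=
  ditto_fedavg_convergence_recursion_general C hC e he1 he_rec
end

section
/- Let K ≥ 2 be an integer, K_a an integer with 0 ≤ K_a ≤ K−1, n ≥ 1 an integer, and σ > 0, 0 < τ ≤ τ_a real numbers; set σ_n² := σ²/n. Given reals ŵ_1, …, ŵ_K ∈ ℝ, let w* := (1/K)·∑_{j=1}^K ŵ_j, let ŵ^{K∖k} := (1/(K−1))·∑_{j ≠ k} ŵ_j, and for λ > 0 define ŵ_k(λ) := (λ·w* + ŵ_k)/(1 + λ). Let B := K·τ² + σ_n² + (K_a/(K−1))·(τ_a² − τ²), let λ*_a := (σ²/n)·K/(K·τ² + (K_a/(K−1))·(τ_a² − τ²)), and let σ_{w,a}² := (1/σ_n² + (K−1)/B)^{-1}. Then ŵ_k(λ*_a) = (σ_{w,a}²/σ_n²)·ŵ_k + ((K−1)·σ_{w,a}²/B)·ŵ^{K∖k};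 that is, in the presence of adversaries the Ditto solution with λ = λ*_a equals the Bayes posterior-mean (MMSE) estimator of w_k for a benign device k, so λ*_a minimizes the expected test error of ŵ_k(λ) on benign devices. -/
open Finset

/-!
Both estimators are precision-weighted means of the local estimate `ŵ_k` and the
leave-one-out mean `ŵ^{K∖k}`. The grand mean is the `(1, K - 1)`-weighted mean of the two, and
Ditto averages `ŵ_k` with it using weights `(1, λ)`; composing the two averages gives weights
`(K + λ, λ (K - 1))`. Writing `D = Kτ² + (K_a/(K - 1))(τ_a² - τ²)`, so that `λ*_a = σ_n² K / D` and
`B = D + σ_n²`, at `λ = λ*_a` these are proportional to the posterior precisions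
`(1/σ_n², (K - 1)/B)` of `w_k` given the two statistics.
-/

noncomputable def precisionWeightedMean (p q x y : ℝ) : ℝ := (p * x + q * y) / (p + q)

namespace precisionWeightedMean

theorem mul_weights {c : ℝ} (hc : c ≠ 0) (p q x y : ℝ) :
    precisionWeightedMean (c * p) (c * q) x y = precisionWeightedMean p q x y := by
  unfold precisionWeightedMean
  rw [mul_assoc, mul_assoc, ← mul_add, ← mul_add, mul_div_mul_left _ _ hc]

theorem nest {p q : ℝ} (hpq : p + q ≠ 0) (a b x y : ℝ) :
    precisionWeightedMean a b x (precisionWeightedMean p q x y)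
      = precisionWeightedMean (a * (p + q) + b * p) (b * q) x y := by
  unfold precisionWeightedMean
  rw [show a * (p + q) + b * p + b * q = (p + q) * (a + b) by ring,
    show (a * (p + q) + b * p) * x + b * q * y = (p + q) * (a * x + b * ((p * x + q * y) / (p + q)))
      by field_simp; ring,
    mul_div_mul_left _ _ hpq]

theorem eq_inv_mul (p q x y : ℝ) :
    precisionWeightedMean p q x y = p * (p + q)⁻¹ * x + q * (p + q)⁻¹ * y := by
  unfold precisionWeightedMean
  ring

end precisionWeightedMean

theorem mean_eq_precisionWeightedMean_leaveOneOut {ι : Type*} [Fintype ι] [DecidableEq ι]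
    (hι : 1 < Fintype.card ι) (f : ι → ℝ) (k : ι) :
    (1 / (Fintype.card ι : ℝ)) * ∑ j, f j
      = precisionWeightedMean 1 ((Fintype.card ι : ℝ) - 1)
          (f k) ((1 / ((Fintype.card ι : ℝ) - 1)) * ∑ j ∈ univ.erase k, f j) := by
  have hcard : (Fintype.card ι : ℝ) - 1 ≠ 0 := by
    rw [sub_ne_zero]; exact_mod_cast hι.ne'
  rw [← add_sum_erase univ f (mem_univ k)]
  unfold precisionWeightedMean
  rw [add_sub_cancel, ← mul_assoc, mul_one_div_cancel hcard, one_mul, one_mul, one_div_mul_eq_div]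

theorem div_one_add_eq_precisionWeightedMean (lam w x : ℝ) :
    (lam * w + x) / (1 + lam) = precisionWeightedMean 1 lam x w := by
  unfold precisionWeightedMean
  ring

theorem ditto_weights_eq_posterior_precisions {s D K : ℝ} (hs : 0 < s) (hD : 0 < D) (hK : 0 < K)
    (x y : ℝ) :
    precisionWeightedMean (K + s * K / D) (s * K / D * (K - 1)) x y
      = precisionWeightedMean (1 / s) ((K - 1) / (D + s)) x y := by
  have hc : s * K * (D + s) / D ≠ 0 := by positivity
  rw [← precisionWeightedMean.mul_weights hc (1 / s)]
  congr 1 <;> field_simp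

theorem ditto_point_estimation_adversarial_bayes_optimal_lambda_general
    (K K_a n : ℕ) (hK : 2 ≤ K) (hn : 1 ≤ n)
    (σ τ τ_a : ℝ) (hσ : 0 < σ) (hτ : 0 < τ) (hττa : τ ≤ τ_a)
    (σn2 : ℝ) (hσn2 : σn2 = σ ^ 2 / n)
    (whatLocal : Fin K → ℝ) (k : Fin K)
    (wstar : ℝ) (hwstar : wstar = (1 / (K : ℝ)) * ∑ j, whatLocal j)
    (whatMinus : ℝ)
    (hwhatMinus : whatMinus = (1 / ((K : ℝ) - 1)) * ∑ j ∈ univ.erase k, whatLocal j)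
    (dittoEst : ℝ → ℝ)
    (hditto : ∀ lam : ℝ, 0 < lam → dittoEst lam = (lam * wstar + whatLocal k) / (1 + lam))
    (B lamStarA σwa2 : ℝ)
    (hB : B = (K : ℝ) * τ ^ 2 + σn2 + ((K_a : ℝ) / ((K : ℝ) - 1)) * (τ_a ^ 2 - τ ^ 2))
    (hlamStarA : lamStarA = (σ ^ 2 / n) *
      ((K : ℝ) / ((K : ℝ) * τ ^ 2 + ((K_a : ℝ) / ((K : ℝ) - 1)) * (τ_a ^ 2 - τ ^ 2))))
    (hσwa2 : σwa2 = (1 / σn2 + ((K : ℝ) - 1) / B)⁻¹) :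
    dittoEst lamStarA = (σwa2 / σn2) * whatLocal k
      + (((K : ℝ) - 1) * σwa2 / B) * whatMinus := by
  set D := (K : ℝ) * τ ^ 2 + ((K_a : ℝ) / ((K : ℝ) - 1)) * (τ_a ^ 2 - τ ^ 2)
  have hK_one_lt : (1 : ℝ) < K := by exact_mod_cast hK
  have hσn2_pos : 0 < σn2 := by rw [hσn2]; positivity
  have hD : 0 < D := by
    have : 0 ≤ τ_a ^ 2 - τ ^ 2 := sub_nonneg.2 (pow_le_pow_left₀ hτ.le hττa 2)
    have : 0 ≤ (K_a : ℝ) / ((K : ℝ) - 1) := div_nonneg K_a.cast_nonneg (by linarith)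
    positivity
  have hlam : lamStarA = σn2 * K / D := by rw [hlamStarA, hσn2, mul_div_assoc]
  have hBD : B = D + σn2 := by rw [hB]; ring
  have hwstar_mean : wstar = precisionWeightedMean 1 ((K : ℝ) - 1) (whatLocal k) whatMinus := by
    have hcard : 1 < Fintype.card (Fin K) := by rw [Fintype.card_fin]; omega
    simpa [hwstar, hwhatMinus] using mean_eq_precisionWeightedMean_leaveOneOut hcard whatLocal k
  rw [hditto lamStarA (by rw [hlam]; positivity), div_one_add_eq_precisionWeightedMean, hwstar_mean,
    precisionWeightedMean.nest (by rw [add_sub_cancel]; positivity), hlam, add_sub_cancel, one_mul, mul_one,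
    ditto_weights_eq_posterior_precisions hσn2_pos hD (by linarith), ← hBD,
    precisionWeightedMean.eq_inv_mul, ← hσwa2]
  ring

/-- Federated point estimation with adversaries: the Ditto estimate at
`λ*_a = (σ²/n)·K/(Kτ² + (K_a/(K-1))(τ_a² - τ²))` equals the Bayes posterior-mean
(MMSE) estimator of `w_k` for a benign device `k`. -/
theorem ditto_point_estimation_adversarial_bayes_optimal_lambda
    (K K_a n : ℕ) (hK : 2 ≤ K) (hKa : K_a ≤ K - 1) (hn : 1 ≤ n)
    (σ τ τ_a : ℝ) (hσ : 0 < σ) (hτ : 0 < τ) (hττa : τ ≤ τ_a)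
    (σn2 : ℝ) (hσn2 : σn2 = σ ^ 2 / n)
    (whatLocal : Fin K → ℝ) (k : Fin K)
    (wstar : ℝ) (hwstar : wstar = (1 / (K : ℝ)) * ∑ j, whatLocal j)
    (whatMinus : ℝ)
    (hwhatMinus : whatMinus = (1 / ((K : ℝ) - 1)) * ∑ j ∈ univ.erase k, whatLocal j)
    (dittoEst : ℝ → ℝ)
    (hditto : ∀ lam : ℝ, 0 < lam → dittoEst lam = (lam * wstar + whatLocal k) / (1 + lam))
    (B lamStarA σwa2 : ℝ)
    (hB : B = (K : ℝ) * τ ^ 2 + σn2 + ((K_a : ℝ) / ((K : ℝ) - 1)) * (τ_a ^ 2 - τ ^ 2))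
    (hlamStarA : lamStarA = (σ ^ 2 / n) *
      ((K : ℝ) / ((K : ℝ) * τ ^ 2 + ((K_a : ℝ) / ((K : ℝ) - 1)) * (τ_a ^ 2 - τ ^ 2))))
    (hσwa2 : σwa2 = (1 / σn2 + ((K : ℝ) - 1) / B)⁻¹) :
    dittoEst lamStarA = (σwa2 / σn2) * whatLocal k
      + (((K : ℝ) - 1) * σwa2 / B) * whatMinus :=
  ditto_point_estimation_adversarial_bayes_optimal_lambda_general K K_a n hK hn σ τ τ_a hσ hτ hττa
    σn2 hσn2 whatLocal k wstar hwstar whatMinus hwhatMinus dittoEst hditto B lamStarA σwa2 hB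
    hlamStarA hσwa2
end

section
/- Let K ≥ 2 be an integer and σ > 0. Let ζ_1, …, ζ_K be independent real random variables, each with Gaussian law N(0, σ²). For a = (a_1, …, a_K) ∈ ℝ^K define V(a) := E[(1/K)·∑_{k=1}^K (ζ_k + a_k)⁴ − ((1/K)·∑_{k=1}^K (ζ_k + a_k)²)²], the expected empirical variance across devices of the squared errors. Then V(a) ≥ V(0) for every a ∈ ℝ^K, with equality if and only if a = 0; moreover V(0) = 2σ⁴·(K−1)/K. -/
open MeasureTheory ProbabilityTheory
open scoped NNReal

/-!
Put `X_k = ζ_k + a_k`, a Gaussian with mean `a_k` and variance `σ²`, and `Y_k = X_k²`. For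
independent square-integrable `Y_k` the expected empirical variance is
`(1/K) ∑ E[Y_k²] - (1/K²) (∑ Var Y_k + (∑ E Y_k)²)`. The Gaussian moments `E X² = a² + σ²` and
`E X⁴ = a⁴ + 6σ²a² + 3σ⁴`, read off from the derivatives at `0` of the moment generating function
`exp (a t + σ² t² / 2)`, turn this into
`V(a) = V(0) + (4σ²(K-1) ∑ a_k² + K ∑ a_k⁴ - (∑ a_k²)²) / K²`,
and the last term is positive for `a ≠ 0` because `(∑ a_k²)² ≤ K ∑ a_k⁴` (Cauchy–Schwarz).
-/

section ExpQuadratic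

open Real

variable {m v : ℝ}

lemma hasDerivAt_const_add_mul (t : ℝ) : HasDerivAt (fun t ↦ m + v * t) v t := by
  simpa using ((hasDerivAt_id t).const_mul v).const_add m

lemma hasDerivAt_mul_exp_quadratic {p : ℝ → ℝ} {p' t : ℝ} (hp : HasDerivAt p p' t) :
    HasDerivAt (fun t ↦ p t * rexp (m * t + v * t ^ 2 / 2))
      ((p' + p t * (m + v * t)) * rexp (m * t + v * t ^ 2 / 2)) t := by
  have hq : HasDerivAt (fun t ↦ m * t + v * t ^ 2 / 2) (m + v * t) t := by
    refine (((hasDerivAt_id' t).const_mul m).fun_add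
      (((hasDerivAt_pow 2 t).const_mul v).div_const 2)).congr_deriv ?_
    ring
  exact (hp.fun_mul hq.exp).congr_deriv (by ring)

lemma iteratedDeriv_two_exp_quadratic :
    iteratedDeriv 2 (fun t ↦ rexp (m * t + v * t ^ 2 / 2))
      = fun t ↦ ((m + v * t) ^ 2 + v) * rexp (m * t + v * t ^ 2 / 2) := by
  have h1 : deriv (fun t ↦ rexp (m * t + v * t ^ 2 / 2))
      = fun t ↦ (m + v * t) * rexp (m * t + v * t ^ 2 / 2) := by
    funext t
    simpa using (hasDerivAt_mul_exp_quadratic (m := m) (v := v) (hasDerivAt_const t (1 : ℝ))).deriv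
  rw [iteratedDeriv_succ, iteratedDeriv_one, h1]
  funext t
  rw [(hasDerivAt_mul_exp_quadratic (hasDerivAt_const_add_mul t)).deriv]
  ring

lemma iteratedDeriv_four_exp_quadratic :
    iteratedDeriv 4 (fun t ↦ rexp (m * t + v * t ^ 2 / 2))
      = fun t ↦ ((m + v * t) ^ 4 + 6 * v * (m + v * t) ^ 2 + 3 * v ^ 2)
        * rexp (m * t + v * t ^ 2 / 2) := by
  have h3 : iteratedDeriv 3 (fun t ↦ rexp (m * t + v * t ^ 2 / 2))
      = fun t ↦ ((m + v * t) ^ 3 + 3 * v * (m + v * t)) * rexp (m * t + v * t ^ 2 / 2) := by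
    rw [iteratedDeriv_succ, iteratedDeriv_two_exp_quadratic]
    funext t
    rw [(hasDerivAt_mul_exp_quadratic (((hasDerivAt_const_add_mul t).fun_pow 2).add_const v)).deriv]
    ring
  rw [iteratedDeriv_succ, h3]
  funext t
  have hu := hasDerivAt_const_add_mul (m := m) (v := v) t
  rw [(hasDerivAt_mul_exp_quadratic ((hu.fun_pow 3).fun_add (hu.const_mul (3 * v)))).deriv]
  ring

end ExpQuadratic

namespace ProbabilityTheory

section GaussianMoments

variable {m : ℝ} {v : ℝ≥0}

lemma integral_pow_gaussianReal_eq_iteratedDeriv (n : ℕ) :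
    ∫ x, x ^ n ∂gaussianReal m v
      = iteratedDeriv n (fun t ↦ Real.exp (m * t + v * t ^ 2 / 2)) 0 := by
  rw [← mgf_fun_id_gaussianReal, iteratedDeriv_mgf_zero (by simp)]
  rfl

lemma integral_sq_gaussianReal : ∫ x, x ^ 2 ∂gaussianReal m v = m ^ 2 + v := by
  simp [integral_pow_gaussianReal_eq_iteratedDeriv, iteratedDeriv_two_exp_quadratic]

lemma integral_pow_four_gaussianReal :
    ∫ x, x ^ 4 ∂gaussianReal m v = m ^ 4 + 6 * v * m ^ 2 + 3 * v ^ 2 := by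
  simp [integral_pow_gaussianReal_eq_iteratedDeriv, iteratedDeriv_four_exp_quadratic]

end GaussianMoments

section EmpiricalVariance

variable {Ω ι : Type*} [MeasurableSpace Ω] {μ : Measure Ω} [IsProbabilityMeasure μ] [Fintype ι]
  {Y : ι → Ω → ℝ}

lemma integral_sq_sum_of_pairwise_indepFun (hY : ∀ i, MemLp (Y i) 2 μ)
    (hind : Pairwise fun i j ↦ Y i ⟂ᵢ[μ] Y j) :
    ∫ ω, (∑ i, Y i ω) ^ 2 ∂μ = ∑ i, Var[Y i; μ] + (∑ i, μ[Y i]) ^ 2 := by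
  have hsum : MemLp (∑ i, Y i) 2 μ := memLp_finsetSum' _ fun i _ ↦ hY i
  have hvar := variance_eq_sub hsum
  rw [IndepFun.variance_sum (fun i _ ↦ hY i) (fun i _ j _ hij ↦ hind hij)] at hvar
  simp only [Finset.sum_apply, Pi.pow_apply] at hvar
  rw [integral_finsetSum _ fun i _ ↦ (hY i).integrable one_le_two] at hvar
  linarith

lemma integral_empiricalVariance_of_pairwise_indepFun (c : ℝ) (hY : ∀ i, MemLp (Y i) 2 μ)
    (hind : Pairwise fun i j ↦ Y i ⟂ᵢ[μ] Y j) :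
    ∫ ω, (c * ∑ i, Y i ω ^ 2 - (c * ∑ i, Y i ω) ^ 2) ∂μ
      = c * ∑ i, ∫ ω, Y i ω ^ 2 ∂μ - c ^ 2 * (∑ i, Var[Y i; μ] + (∑ i, μ[Y i]) ^ 2) := by
  have hsum : MemLp (fun ω ↦ ∑ i, Y i ω) 2 μ := by
    simpa only [← Finset.sum_apply] using memLp_finsetSum' _ fun i _ ↦ hY i
  simp_rw [mul_pow c]
  rw [integral_sub ((integrable_finsetSum _ fun i _ ↦ (hY i).integrable_sq).const_mul c)
      (hsum.integrable_sq.const_mul _), integral_const_mul, integral_const_mul,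
    integral_finsetSum _ fun i _ ↦ (hY i).integrable_sq,
    integral_sq_sum_of_pairwise_indepFun hY hind]

end EmpiricalVariance

section GaussianSquares

variable {Ω : Type*} [MeasurableSpace Ω] {μ : Measure Ω} {X : Ω → ℝ} {m : ℝ} {v : ℝ≥0}

lemma HasLaw.add_const_gaussianReal (hX : HasLaw X (gaussianReal m v) μ) (c : ℝ) :
    HasLaw (fun ω ↦ X ω + c) (gaussianReal (m + c) v) μ :=
  HasLaw.fun_comp ⟨by fun_prop, gaussianReal_map_add_const c⟩ hX

lemma HasLaw.integrable_pow_of_gaussianReal (hX : HasLaw X (gaussianReal m v) μ) (n : ℕ) :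
    Integrable (fun ω ↦ X ω ^ n) μ := by
  have h := integrable_pow_of_mem_interior_integrableExpSet (X := fun x ↦ x)
    (μ := gaussianReal m v) (by simp) n
  rw [← hX.map_eq] at h
  exact (integrable_map_measure (g := fun x ↦ x ^ n) (by fun_prop) hX.aemeasurable).mp h

lemma HasLaw.memLp_sq_of_gaussianReal (hX : HasLaw X (gaussianReal m v) μ) :
    MemLp (fun ω ↦ X ω ^ 2) 2 μ := by
  rw [memLp_two_iff_integrable_sq (hX.aemeasurable.pow_const 2).aestronglyMeasurable]
  simpa only [← pow_mul] using hX.integrable_pow_of_gaussianReal 4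

lemma HasLaw.integral_sq_of_gaussianReal (hX : HasLaw X (gaussianReal m v) μ) :
    ∫ ω, X ω ^ 2 ∂μ = m ^ 2 + v := by
  rw [← integral_sq_gaussianReal, ← hX.integral_comp (by fun_prop)]
  rfl

lemma HasLaw.integral_pow_four_of_gaussianReal (hX : HasLaw X (gaussianReal m v) μ) :
    ∫ ω, X ω ^ 4 ∂μ = m ^ 4 + 6 * v * m ^ 2 + 3 * v ^ 2 := by
  rw [← integral_pow_four_gaussianReal, ← hX.integral_comp (by fun_prop)]
  rfl

lemma HasLaw.variance_sq_of_gaussianReal (hX : HasLaw X (gaussianReal m v) μ) :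
    Var[fun ω ↦ X ω ^ 2; μ] = 4 * v * m ^ 2 + 2 * v ^ 2 := by
  have := hX.isProbabilityMeasure
  rw [variance_eq_sub hX.memLp_sq_of_gaussianReal]
  simp only [Pi.pow_apply, ← pow_mul, hX.integral_sq_of_gaussianReal]
  rw [hX.integral_pow_four_of_gaussianReal]
  ring

end GaussianSquares

lemma integral_empiricalVariance_sq_of_gaussianReal {Ω ι : Type*} [MeasurableSpace Ω]
    {μ : Measure Ω} [IsProbabilityMeasure μ] [Fintype ι] {X : ι → Ω → ℝ} {a : ι → ℝ} {v : ℝ≥0}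
    (hX : ∀ i, HasLaw (X i) (gaussianReal (a i) v) μ) (hind : Pairwise fun i j ↦ X i ⟂ᵢ[μ] X j)
    (c : ℝ) :
    ∫ ω, (c * ∑ i, X i ω ^ 4 - (c * ∑ i, X i ω ^ 2) ^ 2) ∂μ
      = c * ∑ i, (a i ^ 4 + 6 * v * a i ^ 2 + 3 * v ^ 2)
        - c ^ 2 * (∑ i, (4 * v * a i ^ 2 + 2 * v ^ 2) + (∑ i, (a i ^ 2 + v)) ^ 2) := by
  have hsq : Pairwise fun i j ↦ (fun ω ↦ X i ω ^ 2) ⟂ᵢ[μ] (fun ω ↦ X j ω ^ 2) :=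
    fun i j hij ↦ (hind hij).comp (measurable_id.pow_const 2) (measurable_id.pow_const 2)
  simp_rw [show ∀ x : ℝ, x ^ 4 = (x ^ 2) ^ 2 by intro x; ring]
  rw [integral_empiricalVariance_of_pairwise_indepFun c
    (fun i ↦ (hX i).memLp_sq_of_gaussianReal) hsq]
  simp only [← pow_mul, (hX _).integral_pow_four_of_gaussianReal,
    (hX _).variance_sq_of_gaussianReal, (hX _).integral_sq_of_gaussianReal]

lemma sq_sum_sq_lt_mul_sum_sq_add_card_mul_sum_pow_four {ι : Type*} [Fintype ι] {c : ℝ}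
    (hc : 0 < c) {a : ι → ℝ} (ha : a ≠ 0) :
    (∑ i, a i ^ 2) ^ 2 < c * ∑ i, a i ^ 2 + Fintype.card ι * ∑ i, a i ^ 4 := by
  obtain ⟨i, hi⟩ := Function.ne_iff.mp ha
  have hpos : 0 < ∑ i, a i ^ 2 :=
    (sq_pos_of_ne_zero hi).trans_le (Finset.single_le_sum (fun j _ ↦ sq_nonneg (a j))
      (Finset.mem_univ i))
  have hcs := sq_sum_le_card_mul_sum_sq (s := Finset.univ) (f := fun i ↦ a i ^ 2)
  simp only [Finset.card_univ, ← pow_mul] at hcs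
  nlinarith [mul_pos hc hpos]

end ProbabilityTheory

theorem ditto_fairness_variance_minimized_at_zero_general
    {Ω : Type*} [MeasurableSpace Ω] (μ : Measure Ω) [IsProbabilityMeasure μ]
    (K : ℕ) (hK : 2 ≤ K) (σ : ℝ) (hσ : 0 < σ)
    (ζ : Fin K → Ω → ℝ)
    (hindep : iIndepFun ζ μ)
    (hlaw : ∀ k, μ.map (ζ k) = gaussianReal 0 ⟨σ ^ 2, sq_nonneg σ⟩)
    (V : (Fin K → ℝ) → ℝ)
    (hV : ∀ a : Fin K → ℝ, V a =
      ∫ ω, ((1 / (K : ℝ)) * ∑ k, (ζ k ω + a k) ^ 4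
        - ((1 / (K : ℝ)) * ∑ k, (ζ k ω + a k) ^ 2) ^ 2) ∂μ) :
    (∀ a : Fin K → ℝ, V 0 ≤ V a) ∧
    (∀ a : Fin K → ℝ, V a = V 0 ↔ a = 0) ∧
    V 0 = 2 * σ ^ 4 * ((K : ℝ) - 1) / K := by
  have hK' : (2 : ℝ) ≤ K := by exact_mod_cast hK
  -- `⟨σ ^ 2, _⟩` elaborates at type `{r // 0 ≤ r}` rather than `ℝ≥0`, which blocks instance
  -- search and `NNReal` simp lemmas; an abstract `v` avoids this.
  obtain ⟨v, hv, hlaw⟩ : ∃ v : ℝ≥0, (v : ℝ) = σ ^ 2 ∧ ∀ k, μ.map (ζ k) = gaussianReal 0 v :=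
    ⟨_, rfl, hlaw⟩
  have hVa : ∀ a : Fin K → ℝ, V a = 2 * σ ^ 4 * ((K : ℝ) - 1) / K
      + (4 * σ ^ 2 * ((K : ℝ) - 1) * ∑ k, a k ^ 2 + K * ∑ k, a k ^ 4 - (∑ k, a k ^ 2) ^ 2)
        / (K : ℝ) ^ 2 := by
    intro a
    have hX : ∀ k, HasLaw (fun ω ↦ ζ k ω + a k) (gaussianReal (a k) v) μ := fun k ↦ by
      simpa only [zero_add] using (HasLaw.mk (.of_map_ne_zero (hlaw k ▸ NeZero.ne _))
        (hlaw k)).add_const_gaussianReal (a k)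
    have hind : Pairwise fun k j ↦ (fun ω ↦ ζ k ω + a k) ⟂ᵢ[μ] (fun ω ↦ ζ j ω + a j) :=
      fun k j hkj ↦ (hindep.indepFun hkj).comp (measurable_add_const _) (measurable_add_const _)
    rw [hV a, integral_empiricalVariance_sq_of_gaussianReal hX hind]
    simp only [hv, Finset.sum_add_distrib, ← Finset.mul_sum, Finset.sum_const,
      Finset.card_univ, Fintype.card_fin, nsmul_eq_mul]
    field_simp
    ring
  have hV0 : V 0 = 2 * σ ^ 4 * ((K : ℝ) - 1) / K := by simp [hVa]
  have hlt : ∀ a ≠ 0, V 0 < V a := by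
    intro a ha
    have hgap := sq_sum_sq_lt_mul_sum_sq_add_card_mul_sum_pow_four
      (c := 4 * σ ^ 2 * ((K : ℝ) - 1)) (by nlinarith [pow_pos hσ 2]) ha
    rw [Fintype.card_fin] at hgap
    rw [hVa a, hV0]
    exact lt_add_of_pos_right _ (div_pos (sub_pos.mpr hgap) (by positivity))
  refine ⟨fun a ↦ ?_, fun a ↦ ⟨fun h ↦ ?_, fun h ↦ h ▸ rfl⟩, hV0⟩
  · rcases eq_or_ne a 0 with rfl | ha
    · rfl
    · exact (hlt a ha).le
  · by_contra ha
    exact (hlt a ha).ne' h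

/-- Probabilistic core of the fairness theorems: with `ζ_k` i.i.d. `N(0, σ²)` across
devices and deterministic shifts `a_k`, the expected empirical variance across devices
of the squared errors `(ζ_k + a_k)²` is minimized exactly at `a = 0`, where it equals
`2σ⁴(K-1)/K`. -/
theorem ditto_fairness_variance_minimized_at_zero
    {Ω : Type*} [MeasurableSpace Ω] (μ : Measure Ω) [IsProbabilityMeasure μ]
    (K : ℕ) (hK : 2 ≤ K) (σ : ℝ) (hσ : 0 < σ)
    (ζ : Fin K → Ω → ℝ)
    (hmeas : ∀ k, Measurable (ζ k))
    (hindep : iIndepFun ζ μ)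
    (hlaw : ∀ k, μ.map (ζ k) = gaussianReal 0 ⟨σ ^ 2, sq_nonneg σ⟩)
    (V : (Fin K → ℝ) → ℝ)
    (hV : ∀ a : Fin K → ℝ, V a =
      ∫ ω, ((1 / (K : ℝ)) * ∑ k, (ζ k ω + a k) ^ 4
        - ((1 / (K : ℝ)) * ∑ k, (ζ k ω + a k) ^ 2) ^ 2) ∂μ) :
    (∀ a : Fin K → ℝ, V 0 ≤ V a) ∧
    (∀ a : Fin K → ℝ, V a = V 0 ↔ a = 0) ∧
    V 0 = 2 * σ ^ 4 * ((K : ℝ) - 1) / K :=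
  ditto_fairness_variance_minimized_at_zero_general μ K hK σ hσ ζ hindep hlaw V hV
end
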